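/- Correlation weight factorization. Let K = Σ⁻¹ be adapted to G = (V,E), let Ω be the correlation matrix of X_V, and let π be a path between x and y in G with P = V(π). Then ω(π,Ω) = ω(π, Ω_{[P|P̄]}) × IF_P / √(IF_x^{P̄} · IF_y^{P̄}). -/

import Mathlib

open Matrix BigOperators Finset

variable {V : Type*} [Fintype V] [DecidableEq V]

/-- Submatrix of `M` with rows indexed by `A` and columns indexed by `B`. -/
noncomputable def subm (M : Matrix V V ℝ) (A B : Finset V) : Matrix ↥A ↥B ℝ :=
  Matrix.of fun i j => M i.1 j.1

/-- Partial covariance matrix `Σ_{AA·B}` of `A` given a disjoint set `B`. -/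
noncomputable def pcovOn (M : Matrix V V ℝ) (A B : Finset V) : Matrix ↥A ↥A ℝ :=
  subm M A A - subm M A B * (subm M B B)⁻¹ * subm M B A

/-- Partial covariance matrix `Σ_{AA·Ā}` given the complement of `A`. -/
noncomputable def pcov (M : Matrix V V ℝ) (A : Finset V) : Matrix ↥A ↥A ℝ :=
  pcovOn M A Aᶜ

/-- Inflation factor of `A` on `B`. -/
noncomputable def inflF (M : Matrix V V ℝ) (A B : Finset V) : ℝ :=
  ((subm M A A).det * (subm M B B).det) / (subm M (A ∪ B) (A ∪ B)).det

/-- The path weight `ω(π, Γ)` of a walk `p`, computed from `Θ = Γ⁻¹`. -/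
noncomputable def pathWeight (Γ : Matrix V V ℝ) {G : SimpleGraph V} {x y : V}
    (p : G.Walk x y) : ℝ :=
  (-1 : ℝ) ^ (p.support.toFinset.card + 1) *
    ((subm Γ⁻¹ p.support.toFinsetᶜ p.support.toFinsetᶜ).det / Γ⁻¹.det) *
    (p.darts.map fun d => Γ⁻¹ d.toProd.1 d.toProd.2).prod

/-- The partial covariance weight `ω(π, Σ_{AA·Ā})` of a walk `p` with vertices in `A`,
expressed via `K = Σ⁻¹`: `(−1)^{|P|+1} (det K_{A∖P,A∖P}/det K_AA) ∏ κ_uv`. -/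
noncomputable def partialPathWeight (S : Matrix V V ℝ) (A : Finset V) {G : SimpleGraph V}
    {x y : V} (p : G.Walk x y) : ℝ :=
  (-1 : ℝ) ^ (p.support.toFinset.card + 1) *
    ((subm S⁻¹ (A \ p.support.toFinset) (A \ p.support.toFinset)).det /
      (subm S⁻¹ A A).det) *
    (p.darts.map fun d => S⁻¹ d.toProd.1 d.toProd.2).prod

/-- `K` is adapted to `G` when nonzero off-diagonal entries correspond to edges. -/
def Adapted (K : Matrix V V ℝ) (G : SimpleGraph V) : Prop :=
  ∀ u v : V, u ≠ v → K u v ≠ 0 → G.Adj u v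

/-- Correlation-type scaling of a positive definite matrix. -/
noncomputable def corrScale {ι : Type*} (M : Matrix ι ι ℝ) : Matrix ι ι ℝ :=
  Matrix.of fun i j => M i j / (Real.sqrt (M i i) * Real.sqrt (M j j))

/-- The inflated correlation matrix `Φ^V = diag(K)^{1/2} Σ diag(K)^{1/2}`. -/
noncomputable def inflCorr (S : Matrix V V ℝ) : Matrix V V ℝ :=
  Matrix.of fun u v => Real.sqrt (S⁻¹ u u) * S u v * Real.sqrt (S⁻¹ v v)

/-- The weight `ω(π, M)` of a walk `p` whose vertices lie in `P`, computed in the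
induced subgraph from a matrix `M` indexed by `P`; here `V(π) = P`, so the determinant
factor (over the empty set) is `1`. -/
noncomputable def subPathWeight {P : Finset V} (M : Matrix ↥P ↥P ℝ) {G : SimpleGraph V}
    {x y : V} (p : G.Walk x y) (hp : ∀ v ∈ p.support, v ∈ P) : ℝ :=
  (-1 : ℝ) ^ (p.support.toFinset.card + 1) * (1 / M⁻¹.det) *
    (p.darts.attach.map fun d =>
      M⁻¹ ⟨d.1.toProd.1, hp _ (SimpleGraph.Walk.dart_fst_mem_support_of_mem_darts p d.2)⟩
          ⟨d.1.toProd.2, hp _ (SimpleGraph.Walk.dart_snd_mem_support_of_mem_darts p d.2)⟩).prod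

/-- Product of partial correlations `ρ_{uv·V∖{u,v}} = −κ_uv/(√κ_uu √κ_vv)`
over the edges of a walk. -/
noncomputable def prodPartialCorr (S : Matrix V V ℝ) {G : SimpleGraph V} {x y : V}
    (p : G.Walk x y) : ℝ :=
  (p.darts.map fun d => -(corrScale S⁻¹ d.toProd.1 d.toProd.2)).prod

/-- A walk is chordless if every edge of `G` joining two of its vertices is an edge of
the walk. -/
def Chordless {G : SimpleGraph V} {x y : V} (p : G.Walk x y) : Prop :=
  ∀ u v : V, u ∈ p.support → v ∈ p.support → G.Adj u v → s(u, v) ∈ p.edges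

/-- The quantity `φ(π, R) = det((I−R)_{P̄P̄}) ∏ ρ_{uv·V∖{u,v}}`. -/
noncomputable def phiWeight (S : Matrix V V ℝ) {G : SimpleGraph V} {x y : V}
    (p : G.Walk x y) : ℝ :=
  (subm (corrScale S⁻¹) p.support.toFinsetᶜ p.support.toFinsetᶜ).det * prodPartialCorr S p

/-!
Write `Ω = D Σ D` with `D = diag(Σ)^{-1/2}`. Rescaling a matrix by a diagonal `D` rescales the
path weight by `d_x d_y` only: along a path every vertex enters the edge product of `D⁻¹ K D⁻¹`
twice, except the two endpoints, and the determinant ratio absorbs these squares. Hence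
`ω(π,Ω) = ω(π,Σ)/√(σ_xx σ_yy)`, and likewise `ω(π,Ω_{[P|P̄]})` is `ω(π,Σ_{PP·P̄})` divided by the
square roots of the diagonal entries of `Σ_{PP·P̄}` at `x` and `y`. Since `(Σ_{PP·P̄})⁻¹ = K_PP`,
the covariance weights differ by `det K_{P̄P̄} · det K_PP / det K`, which by Jacobi's identity and
the Schur determinant formula is `IF_P`. The same formula gives `IF_x^{P̄} = σ_xx / (Σ_{PP·P̄})_xx`,
which converts the remaining diagonal factors into the inflation factors of the endpoints.
-/

section SchurComplement

variable {S : Matrix V V ℝ}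

omit [Fintype V] [DecidableEq V] in
lemma subm_posDef (hS : S.PosDef) (A : Finset V) : (subm S A A).PosDef :=
  hS.submatrix Subtype.val_injective

omit [Fintype V] in
lemma subm_union_submatrix_eq_fromBlocks (M : Matrix V V ℝ) {A B : Finset V}
    (h : Disjoint A B) :
    (subm M (A ∪ B) (A ∪ B)).submatrix (Equiv.Finset.union A B h) (Equiv.Finset.union A B h) =
      fromBlocks (subm M A A) (subm M A B) (subm M B A) (subm M B B) := by
  ext (i | i) (j | j) <;> rfl

def Finset.sumComplEquiv (A : Finset V) : ↥A ⊕ ↥Aᶜ ≃ V :=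
  (Equiv.Finset.union A Aᶜ disjoint_compl_right).trans
    (Equiv.subtypeUnivEquiv fun v => by simp)

lemma submatrix_sumComplEquiv_eq_fromBlocks (M : Matrix V V ℝ) (A : Finset V) :
    M.submatrix A.sumComplEquiv A.sumComplEquiv =
      fromBlocks (subm M A A) (subm M A Aᶜ) (subm M Aᶜ A) (subm M Aᶜ Aᶜ) := by
  ext (i | i) (j | j) <;> rfl

omit [Fintype V] in
lemma det_subm_union {A B : Finset V} (h : Disjoint A B)
    (hB : IsUnit (subm S B B).det) :
    (subm S (A ∪ B) (A ∪ B)).det = (pcovOn S A B).det * (subm S B B).det := by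
  let := (subm S B B).invertibleOfIsUnitDet hB
  rw [← det_submatrix_equiv_self (Equiv.Finset.union A B h), subm_union_submatrix_eq_fromBlocks,
    det_fromBlocks₂₂, invOf_eq_nonsing_inv, pcovOn, mul_comm]

lemma det_subm_univ (M : Matrix V V ℝ) : (subm M univ univ).det = M.det :=
  det_submatrix_equiv_self (Equiv.subtypeUnivEquiv mem_univ) M

lemma det_eq_det_pcov_mul (A : Finset V)
    (hA : IsUnit (subm S Aᶜ Aᶜ).det) : S.det = (pcov S A).det * (subm S Aᶜ Aᶜ).det := by
  rw [pcov, ← det_subm_union disjoint_compl_right hA, union_compl, det_subm_univ]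

omit [Fintype V] in
lemma inflF_eq_det_div_det_pcovOn {A B : Finset V} (h : Disjoint A B)
    (hB : IsUnit (subm S B B).det) :
    inflF S A B = (subm S A A).det / (pcovOn S A B).det := by
  rw [inflF, det_subm_union h hB, mul_div_mul_right _ _ hB.ne_zero]

lemma subm_inv_mul_pcov (hS : IsUnit S.det) (A : Finset V) (hA : IsUnit (subm S Aᶜ Aᶜ).det) :
    subm S⁻¹ A A * pcov S A = 1 := by
  have hKS : S⁻¹.submatrix A.sumComplEquiv A.sumComplEquiv *
      S.submatrix A.sumComplEquiv A.sumComplEquiv = 1 := by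
    rw [submatrix_mul_equiv, nonsing_inv_mul _ hS, submatrix_one_equiv]
  rw [submatrix_sumComplEquiv_eq_fromBlocks, submatrix_sumComplEquiv_eq_fromBlocks,
    fromBlocks_multiply, ← fromBlocks_one, fromBlocks_inj] at hKS
  obtain ⟨h₁₁, h₁₂, -, -⟩ := hKS
  have h₁₂' : subm S⁻¹ A A * subm S A Aᶜ * (subm S Aᶜ Aᶜ)⁻¹ = -subm S⁻¹ A Aᶜ := by
    rw [eq_neg_of_add_eq_zero_left h₁₂, Matrix.neg_mul, Matrix.mul_assoc,
      mul_nonsing_inv _ hA, Matrix.mul_one]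
  rw [pcov, pcovOn, Matrix.mul_sub, ← Matrix.mul_assoc, ← Matrix.mul_assoc, h₁₂',
    Matrix.neg_mul, sub_neg_eq_add, h₁₁]

lemma subm_inv_mul_pcov_of_posDef (hS : S.PosDef) (A : Finset V) :
    subm S⁻¹ A A * pcov S A = 1 :=
  subm_inv_mul_pcov hS.det_pos.ne'.isUnit A (subm_posDef hS Aᶜ).det_pos.ne'.isUnit

lemma pcov_inv (hS : S.PosDef) (A : Finset V) : (pcov S A)⁻¹ = subm S⁻¹ A A :=
  inv_eq_left_inv (subm_inv_mul_pcov_of_posDef hS A)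

lemma det_subm_inv (hS : IsUnit S.det) (A : Finset V) (hA : IsUnit (subm S Aᶜ Aᶜ).det) :
    (subm S⁻¹ A A).det = (subm S Aᶜ Aᶜ).det / S.det := by
  have h := congrArg det (subm_inv_mul_pcov hS A hA)
  rw [det_mul, det_one] at h
  rw [eq_div_iff hS.ne_zero, det_eq_det_pcov_mul A hA, ← mul_assoc, h, one_mul]

lemma pcov_posDef (hS : S.PosDef) (A : Finset V) : (pcov S A).PosDef := by
  rw [← inv_eq_right_inv (subm_inv_mul_pcov_of_posDef hS A)]
  exact (subm_posDef hS.inv A).inv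

lemma inflF_singleton_compl (hS : S.PosDef) {P : Finset V} {x : V} (hx : x ∈ P) :
    inflF S {x} Pᶜ = S x x / pcov S P ⟨x, hx⟩ ⟨x, hx⟩ := by
  rw [inflF_eq_det_div_det_pcovOn (disjoint_singleton_left.mpr (by simpa))
    (subm_posDef hS Pᶜ).det_pos.ne'.isUnit, det_unique, det_unique]
  simp [pcov, pcovOn, subm, Matrix.sub_apply, mul_apply]

end SchurComplement

lemma diagonal_mul_mul_diagonal_apply {ι : Type*} [Fintype ι] [DecidableEq ι]
    (M : Matrix ι ι ℝ) (c : ι → ℝ) (i j : ι) :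
    (diagonal c * M * diagonal c) i j = M i j * (c i * c j) := by
  simp only [mul_diagonal, diagonal_mul]
  ring

lemma inv_diagonal_mul_mul_diagonal {ι : Type*} [Fintype ι] [DecidableEq ι] (Γ : Matrix ι ι ℝ)
    {d : ι → ℝ} (hd : ∀ i, d i ≠ 0) :
    (diagonal d * Γ * diagonal d)⁻¹ = diagonal d⁻¹ * Γ⁻¹ * diagonal d⁻¹ := by
  have hinv : (diagonal d)⁻¹ = diagonal d⁻¹ :=
    inv_eq_left_inv <| by rw [diagonal_mul_diagonal, ← diagonal_one]; congr; ext i; simp [hd i]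
  rw [Matrix.mul_inv_rev, Matrix.mul_inv_rev, hinv, Matrix.mul_assoc]

lemma subm_diagonal_mul_mul_diagonal (K : Matrix V V ℝ) (e : V → ℝ) (A : Finset V) :
    subm (diagonal e * K * diagonal e) A A =
      diagonal (fun i : ↥A => e i) * subm K A A * diagonal (fun i : ↥A => e i) := by
  ext i j
  simp [subm, mul_diagonal, diagonal_mul]

lemma det_subm_diagonal_mul_mul_diagonal (K : Matrix V V ℝ) (e : V → ℝ) (A : Finset V) :
    (subm (diagonal e * K * diagonal e) A A).det = (subm K A A).det * (∏ v ∈ A, e v) ^ 2 := by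
  rw [subm_diagonal_mul_mul_diagonal, det_mul, det_mul, det_diagonal, prod_coe_sort A e]
  ring

lemma corrScale_eq_diagonal_mul_mul_diagonal {ι : Type*} [Fintype ι] [DecidableEq ι]
    (M : Matrix ι ι ℝ) :
    corrScale M = diagonal (fun i => (√(M i i))⁻¹) * M * diagonal (fun i => (√(M i i))⁻¹) := by
  ext i j
  simp [corrScale, mul_diagonal, diagonal_mul, div_eq_mul_inv]
  ring

namespace SimpleGraph.Walk

variable {G : SimpleGraph V} {x y : V}

omit [Fintype V] [DecidableEq V] in
lemma prod_darts_mul_ends_eq_sq (g : V → ℝ) (p : G.Walk x y) :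
    (p.darts.map fun d => g d.toProd.1 * g d.toProd.2).prod * (g x * g y) =
      (p.support.map g).prod ^ 2 := by
  induction p with
  | nil => simp [sq]
  | cons _ q ih =>
    simp only [darts_cons, support_cons, List.map_cons, List.prod_cons]
    linear_combination g _ ^ 2 * ih

omit [Fintype V] in
lemma IsPath.prod_darts_mul_ends_eq_sq {p : G.Walk x y} (hp : p.IsPath) (g : V → ℝ) :
    (p.darts.map fun d => g d.toProd.1 * g d.toProd.2).prod * (g x * g y) =
      (∏ v ∈ p.support.toFinset, g v) ^ 2 := by
  rw [Walk.prod_darts_mul_ends_eq_sq, List.prod_toFinset g hp.support_nodup]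

end SimpleGraph.Walk

section PathWeight

variable {G : SimpleGraph V} {x y : V}

lemma pathWeight_diagonal_mul_mul_diagonal (Γ : Matrix V V ℝ) {c : V → ℝ} (hc : ∀ v, c v ≠ 0)
    {p : G.Walk x y} (hp : p.IsPath) :
    pathWeight (diagonal c * Γ * diagonal c) p = c x * c y * pathWeight Γ p := by
  set P := p.support.toFinset
  have hcP : ∏ v ∈ P, c⁻¹ v ≠ 0 := prod_ne_zero_iff.mpr fun v _ => inv_ne_zero (hc v)
  have hcPc : ∏ v ∈ Pᶜ, c⁻¹ v ≠ 0 := prod_ne_zero_iff.mpr fun v _ => inv_ne_zero (hc v)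
  have hdet : (diagonal c⁻¹ * Γ⁻¹ * diagonal c⁻¹).det =
      Γ⁻¹.det * ((∏ v ∈ P, c⁻¹ v) * ∏ v ∈ Pᶜ, c⁻¹ v) ^ 2 := by
    rw [prod_mul_prod_compl, det_mul, det_mul, det_diagonal]
    ring
  have hdarts : (p.darts.map fun d => c⁻¹ d.toProd.1 * c⁻¹ d.toProd.2).prod =
      (∏ v ∈ P, c⁻¹ v) ^ 2 * (c x * c y) := by
    rw [← hp.prod_darts_mul_ends_eq_sq]
    simp only [Pi.inv_apply]
    field_simp [hc x, hc y]
  simp only [pathWeight, inv_diagonal_mul_mul_diagonal Γ hc, hdet,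
    det_subm_diagonal_mul_mul_diagonal, diagonal_mul_mul_diagonal_apply]
  rw [List.prod_map_mul, hdarts, mul_div_mul_comm, mul_pow,
    div_mul_cancel_right₀ (pow_ne_zero 2 hcPc)]
  field_simp

omit [Fintype V] in
lemma subPathWeight_diagonal_mul_mul_diagonal {P : Finset V} {p : G.Walk x y} (hp : p.IsPath)
    (hP : p.support.toFinset = P) (h : ∀ v ∈ p.support, v ∈ P) (M : Matrix ↥P ↥P ℝ)
    {c : ↥P → ℝ} (hc : ∀ i, c i ≠ 0) :
    subPathWeight (diagonal c * M * diagonal c) p h =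
      c ⟨x, h x p.start_mem_support⟩ * c ⟨y, h y p.end_mem_support⟩ * subPathWeight M p h := by
  set e : V → ℝ := fun v => if hv : v ∈ P then (c ⟨v, hv⟩)⁻¹ else 1
  have hce : ∀ i : ↥P, c⁻¹ i = e i := fun i => by simp [e, i.2]
  have hdet : (diagonal c⁻¹ * M⁻¹ * diagonal c⁻¹).det = M⁻¹.det * (∏ v ∈ P, e v) ^ 2 := by
    rw [det_mul, det_mul, det_diagonal, ← prod_coe_sort P e]
    simp only [← hce]
    ring
  have hex : e x = (c ⟨x, h x p.start_mem_support⟩)⁻¹ := by simp [e, h x p.start_mem_support]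
  have hey : e y = (c ⟨y, h y p.end_mem_support⟩)⁻¹ := by simp [e, h y p.end_mem_support]
  have hdarts : (p.darts.map fun d => e d.toProd.1 * e d.toProd.2).prod =
      (∏ v ∈ P, e v) ^ 2 / (e x * e y) := by
    rw [← hP, ← hp.prod_darts_mul_ends_eq_sq, mul_div_cancel_right₀]
    simp [hex, hey, hc]
  have hprod : ∏ v ∈ P, e v ≠ 0 := by
    rw [← prod_coe_sort P e]
    exact prod_ne_zero_iff.mpr fun i _ => by simp [← hce, hc i]
  simp only [subPathWeight, inv_diagonal_mul_mul_diagonal M hc, hdet,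
    diagonal_mul_mul_diagonal_apply, hce]
  rw [List.prod_map_mul, List.attach_map_val (f := fun d : G.Dart => e d.toProd.1 * e d.toProd.2),
    hdarts, hex, hey]
  field_simp

lemma pathWeight_corrScale {S : Matrix V V ℝ} (hS : ∀ v, 0 < S v v) {p : G.Walk x y}
    (hp : p.IsPath) : pathWeight (corrScale S) p = pathWeight S p / (√(S x x) * √(S y y)) := by
  rw [corrScale_eq_diagonal_mul_mul_diagonal,
    pathWeight_diagonal_mul_mul_diagonal _
      (fun v => inv_ne_zero (Real.sqrt_pos.mpr (hS v)).ne') hp]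
  field_simp

omit [Fintype V] in
lemma subPathWeight_corrScale {P : Finset V} {p : G.Walk x y} (hp : p.IsPath)
    (hP : p.support.toFinset = P) (h : ∀ v ∈ p.support, v ∈ P) {M : Matrix ↥P ↥P ℝ}
    (hM : ∀ i, 0 < M i i) :
    subPathWeight (corrScale M) p h = subPathWeight M p h /
      (√(M ⟨x, h x p.start_mem_support⟩ ⟨x, h x p.start_mem_support⟩) *
        √(M ⟨y, h y p.end_mem_support⟩ ⟨y, h y p.end_mem_support⟩)) := by
  rw [corrScale_eq_diagonal_mul_mul_diagonal,
    subPathWeight_diagonal_mul_mul_diagonal hp hP h _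
      (fun i => inv_ne_zero (Real.sqrt_pos.mpr (hM i)).ne')]
  field_simp

omit [Fintype V] in
lemma subPathWeight_of_inv_eq_subm {P : Finset V} {p : G.Walk x y}
    (h : ∀ v ∈ p.support, v ∈ P) {M : Matrix ↥P ↥P ℝ} {K : Matrix V V ℝ}
    (hM : M⁻¹ = subm K P P) :
    subPathWeight M p h = (-1 : ℝ) ^ (p.support.toFinset.card + 1) * (1 / (subm K P P).det) *
      (p.darts.map fun d => K d.toProd.1 d.toProd.2).prod := by
  rw [subPathWeight, hM]
  congr 2
  exact List.attach_map_val (f := fun d : G.Dart => K d.toProd.1 d.toProd.2)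

lemma pathWeight_eq_subPathWeight_pcov_mul_inflF {S : Matrix V V ℝ} (hS : S.PosDef)
    (p : G.Walk x y) (h : ∀ v ∈ p.support, v ∈ p.support.toFinset) :
    pathWeight S p = subPathWeight (pcov S p.support.toFinset) p h *
      inflF S p.support.toFinset p.support.toFinsetᶜ := by
  have hdetS : S.det ≠ 0 := hS.det_pos.ne'
  have hJacobi : (subm S⁻¹ p.support.toFinsetᶜ p.support.toFinsetᶜ).det =
      (subm S p.support.toFinset p.support.toFinset).det / S.det := by
    rw [det_subm_inv hdetS.isUnit _
      (by rw [compl_compl]; exact (subm_posDef hS _).det_pos.ne'.isUnit), compl_compl]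
  have hKP := congrArg det (subm_inv_mul_pcov_of_posDef hS p.support.toFinset)
  rw [det_mul, det_one, pcov] at hKP
  rw [pathWeight, subPathWeight_of_inv_eq_subm h (pcov_inv hS _),
    inflF_eq_det_div_det_pcovOn disjoint_compl_right (subm_posDef hS _).det_pos.ne'.isUnit,
    hJacobi, det_nonsing_inv, Ring.inverse_eq_inv', eq_one_div_of_mul_eq_one_left hKP]
  field_simp [right_ne_zero_of_mul_eq_one hKP]

end PathWeight

theorem correlation_weight_factorization_general {V : Type*} [Fintype V] [DecidableEq V]
    (S : Matrix V V ℝ) (hS : S.PosDef) (G : SimpleGraph V)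
    {x y : V} (p : G.Walk x y) (hp : p.IsPath) :
    pathWeight (corrScale S) p =
      subPathWeight (corrScale (pcov S p.support.toFinset)) p
          (fun v hv => List.mem_toFinset.mpr hv) *
        (inflF S p.support.toFinset p.support.toFinsetᶜ /
          Real.sqrt (inflF S {x} p.support.toFinsetᶜ * inflF S {y} p.support.toFinsetᶜ)) := by
  have hx : x ∈ p.support.toFinset := List.mem_toFinset.mpr p.start_mem_support
  have hy : y ∈ p.support.toFinset := List.mem_toFinset.mpr p.end_mem_support
  have hsupp : ∀ v ∈ p.support, v ∈ p.support.toFinset := fun v hv => List.mem_toFinset.mpr hv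
  have hpcov := pcov_posDef hS p.support.toFinset
  rw [pathWeight_corrScale (fun v => hS.diag_pos) hp,
    subPathWeight_corrScale hp rfl hsupp (fun i => hpcov.diag_pos),
    pathWeight_eq_subPathWeight_pcov_mul_inflF hS p hsupp, inflF_singleton_compl hS hx,
    inflF_singleton_compl hS hy]
  have hdx := hpcov.diag_pos (i := ⟨x, hx⟩)
  have hdy := hpcov.diag_pos (i := ⟨y, hy⟩)
  rw [Real.sqrt_mul (div_nonneg hS.diag_pos.le hdx.le), Real.sqrt_div' _ hdx.le,
    Real.sqrt_div' _ hdy.le]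
  field_simp

/-- correlation weight factorization:
`ω(π,Ω) = ω(π, Ω_{[P|P̄]}) × IF_P / √(IF_x^{P̄} · IF_y^{P̄})`. -/
theorem correlation_weight_factorization {V : Type*} [Fintype V] [DecidableEq V]
    (S : Matrix V V ℝ) (hS : S.PosDef) (G : SimpleGraph V) [DecidableRel G.Adj]
    (hadapt : Adapted S⁻¹ G) {x y : V} (hxy : x ≠ y) (p : G.Walk x y) (hp : p.IsPath) :
    pathWeight (corrScale S) p =
      subPathWeight (corrScale (pcov S p.support.toFinset)) p
          (fun v hv => List.mem_toFinset.mpr hv) *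
        (inflF S p.support.toFinset p.support.toFinsetᶜ /
          Real.sqrt (inflF S {x} p.support.toFinsetᶜ * inflF S {y} p.support.toFinsetᶜ)) :=
  correlation_weight_factorization_general S hS G p hp
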